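/- arXiv:2510.03470 — 4 statements merged into one kernel-verified Lean document; each statement's English description precedes it below -/
import Mathlib

section
/- Let d, n ∈ ℕ and let F_1, …, F_n : ℝ^d → ℝ^d each be three times continuously differentiable (ContDiff ℝ 3). For λ ∈ ℝ let R_λ = (id + λF_n) ∘ ⋯ ∘ (id + λF_1) be the residual tower. Then for every z ∈ ℝ^d, the function λ ↦ R_λ(z) − ( z + λ·Σ_{i=1}^n F_i(z) + λ²·Σ_{1 ≤ i < j ≤ n} (D F_j)(z)(F_i(z)) ) is O(λ³) as λ → 0, where (D F_j)(z) denotes the Fréchet derivative of F_j at z. -/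
/-
Write `R_m(λ) = z + λ a_m + λ² b_m + O(λ³)` for the partial tower after `m` blocks. Feeding this
into the next block `w ↦ w + λ F(w)` and Taylor-expanding `F` to second order around `z` gives
`F(R_m(λ)) = F z + λ (D F)(z) a_m + O(λ²)`, because `R_m(λ) - z = O(λ)`. Hence
`a_{m+1} = a_m + F_{m+1} z` and `b_{m+1} = b_m + (D F_{m+1})(z) a_m`, and unrolling these recursions
gives the two sums of the expansion.
-/

open Topology Asymptotics Finset

/-- A single residual block `(1 + λ F)(z) = z + λ • F z`. -/
noncomputable def resBlock {d : ℕ} (lam : ℝ)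
    (F : EuclideanSpace ℝ (Fin d) → EuclideanSpace ℝ (Fin d)) :
    EuclideanSpace ℝ (Fin d) → EuclideanSpace ℝ (Fin d) :=
  fun z => z + lam • F z

/-- The residual tower `(1 + λ F_m) ∘ ⋯ ∘ (1 + λ F_1)` built from the blocks
`F 1, …, F m` (the index `0` block is never used). -/
noncomputable def resTower {d : ℕ} (lam : ℝ)
    (F : ℕ → EuclideanSpace ℝ (Fin d) → EuclideanSpace ℝ (Fin d)) :
    ℕ → EuclideanSpace ℝ (Fin d) → EuclideanSpace ℝ (Fin d)
  | 0 => id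
  | m + 1 => resBlock lam (F (m + 1)) ∘ resTower lam F m

open Metric

section

variable {E G : Type*} [NormedAddCommGroup E] [NormedSpace ℝ E]
  [NormedAddCommGroup G] [NormedSpace ℝ G]

theorem ContDiffAt.isBigO_sub_sub_fderiv {f : E → G} {z : E} (hf : ContDiffAt ℝ 2 f z) :
    (fun y => f y - f z - fderiv ℝ f z (y - z)) =O[𝓝 z] fun y => ‖y - z‖ ^ 2 := by
  -- `fderiv ℝ f` is Lipschitz near `z`, so on the ball of radius `r = ‖y - z‖` it stays within
  -- `K r` of `fderiv ℝ f z`; the mean value inequality then bounds the remainder by `K r²`.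
  obtain ⟨K, s, hs, hK⟩ := (hf.fderiv_right (m := 1) le_rfl).exists_lipschitzOnWith
  have hdiff : ∀ᶠ y in 𝓝 z, DifferentiableAt ℝ f y :=
    (hf.eventually (by simp)).mono fun y hy => hy.differentiableAt (by norm_num)
  obtain ⟨ε, hε, hball⟩ := Metric.mem_nhds_iff.1 (Filter.inter_mem hs hdiff)
  refine isBigO_iff.2 ⟨K, ?_⟩
  filter_upwards [ball_mem_nhds z hε] with y hy
  set r := ‖y - z‖
  have hsub : closedBall z r ⊆ s ∩ {y | DifferentiableAt ℝ f y} :=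
    (closedBall_subset_ball (mem_ball_iff_norm.1 hy)).trans hball
  have hz : z ∈ closedBall z r := mem_closedBall_self (norm_nonneg _)
  have hderiv : ∀ x ∈ closedBall z r, ‖fderiv ℝ f x - fderiv ℝ f z‖ ≤ K * r := fun x hx => by
    rw [← dist_eq_norm]
    exact (hK.dist_le_mul x (hsub hx).1 z (hsub hz).1).trans
      (mul_le_mul_of_nonneg_left (mem_closedBall.1 hx) K.coe_nonneg)
  calc ‖f y - f z - fderiv ℝ f z (y - z)‖ ≤ K * r * r :=
        (convex_closedBall z r).norm_image_sub_le_of_norm_fderiv_le' (fun x hx => (hsub hx).2)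
          hderiv hz (mem_closedBall_iff_norm.2 le_rfl)
    _ = K * ‖r ^ 2‖ := by rw [norm_pow, norm_norm]; ring

theorem isBigO_smul_const_self {α : Type*} (l : Filter α) (k : α → ℝ) (v : E) :
    (fun x => k x • v) =O[l] k :=
  isBigO_iff.2 ⟨‖v‖, .of_forall fun x => by rw [norm_smul, mul_comm]⟩

theorem isBigO_pow_pow_nhds_zero {i j : ℕ} (h : i ≤ j) :
    (fun t : ℝ => t ^ j) =O[𝓝 0] fun t => t ^ i := by
  rcases h.eq_or_lt with rfl | h
  · exact isBigO_refl _ _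
  · exact (isLittleO_pow_pow h).isBigO

theorem ContDiffAt.isBigO_comp_sub_sub_fderiv {f : E → G} {z : E} (hf : ContDiffAt ℝ 2 f z)
    {c : ℝ → E} (hc : (fun t => c t - z) =O[𝓝 0] fun t => t) :
    (fun t => f (c t) - f z - fderiv ℝ f z (c t - z)) =O[𝓝 0] fun t => t ^ 2 := by
  have hcz : Filter.Tendsto c (𝓝 0) (𝓝 z) :=
    tendsto_sub_nhds_zero_iff.1 (hc.trans_tendsto Filter.tendsto_id)
  exact (hf.isBigO_sub_sub_fderiv.comp_tendsto hcz).trans (hc.norm_left.pow 2)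

def HasSecondOrderExpansion (c : ℝ → E) (z a b : E) : Prop :=
  (fun t => c t - (z + t • a + t ^ 2 • b)) =O[𝓝 0] fun t => t ^ 3

namespace HasSecondOrderExpansion

variable {c : ℝ → E} {z a b : E}

theorem isBigO_sub_sub_smul (hc : HasSecondOrderExpansion c z a b) :
    (fun t => c t - z - t • a) =O[𝓝 0] fun t => t ^ 2 :=
  ((hc.trans (isBigO_pow_pow_nhds_zero (by norm_num))).add (isBigO_smul_const_self _ _ b)).congr
    (fun t => by abel) (fun _ => rfl)

theorem isBigO_sub (hc : HasSecondOrderExpansion c z a b) :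
    (fun t => c t - z) =O[𝓝 0] fun t => t := by
  have hsq : (fun t : ℝ => t ^ 2) =O[𝓝 0] fun t => t := by
    simpa using isBigO_pow_pow_nhds_zero (show 1 ≤ 2 by norm_num)
  exact ((hc.isBigO_sub_sub_smul.trans hsq).add (isBigO_smul_const_self _ _ a)).congr
    (fun t => by abel) (fun _ => rfl)

theorem add_smul_comp {f : E → E} (hc : HasSecondOrderExpansion c z a b)
    (hf : ContDiffAt ℝ 2 f z) :
    HasSecondOrderExpansion (fun t => c t + t • f (c t)) z (a + f z) (b + fderiv ℝ f z a) := by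
  set D := fderiv ℝ f z
  have hlin : (fun t : ℝ => t • D (c t - z - t • a)) =O[𝓝 0] fun t => t ^ 3 :=
    ((isBigO_refl _ _).smul ((D.isBigO_comp _ _).trans hc.isBigO_sub_sub_smul)).congr_right
      (fun t => by rw [smul_eq_mul]; ring)
  have htaylor : (fun t : ℝ => t • (f (c t) - f z - D (c t - z))) =O[𝓝 0] fun t => t ^ 3 :=
    ((isBigO_refl _ _).smul (hf.isBigO_comp_sub_sub_fderiv hc.isBigO_sub)).congr_right
      (fun t => by rw [smul_eq_mul]; ring)
  refine ((hc.add htaylor).add hlin).congr_left fun t => ?_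
  simp only [map_sub, map_smul]
  module

end HasSecondOrderExpansion

end

theorem sum_filter_lt_Icc_succ {M : Type*} [AddCommMonoid M] (g : ℕ → ℕ → M) (m : ℕ) :
    ∑ p ∈ (Icc 1 (m + 1) ×ˢ Icc 1 (m + 1)).filter (fun p => p.1 < p.2), g p.1 p.2 =
      ∑ p ∈ (Icc 1 m ×ˢ Icc 1 m).filter (fun p => p.1 < p.2), g p.1 p.2 +
        ∑ i ∈ Icc 1 m, g i (m + 1) := by
  simp only [sum_filter, sum_product]
  rw [sum_Icc_succ_top (by omega), ← sum_add_distrib]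
  have hlast : ∑ j ∈ Icc 1 (m + 1), (if m + 1 < j then g (m + 1) j else 0) = 0 :=
    sum_eq_zero fun j hj => if_neg (by simp at hj; omega)
  rw [hlast, add_zero]
  refine sum_congr rfl fun i hi => ?_
  rw [sum_Icc_succ_top (by omega), if_pos (by simp at hi; omega)]

/-- **Residual tower expansion.** For `C³` residual branches `F_1, …, F_n`, at every
point `z` the residual tower satisfies
`R_λ(z) = z + λ ∑ᵢ Fᵢ(z) + λ² ∑_{i<j} (D F_j)(z)(Fᵢ(z)) + O(λ³)` as `λ → 0`. -/
theorem residual_tower_expansion (d n : ℕ)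
    (F : ℕ → EuclideanSpace ℝ (Fin d) → EuclideanSpace ℝ (Fin d))
    (hF : ∀ i ∈ Finset.Icc 1 n, ContDiff ℝ 3 (F i))
    (z : EuclideanSpace ℝ (Fin d)) :
    (fun lam : ℝ =>
        resTower lam F n z -
          (z + lam • ∑ i ∈ Finset.Icc 1 n, F i z
             + lam ^ 2 •
               ∑ p ∈ (Finset.Icc 1 n ×ˢ Finset.Icc 1 n).filter (fun p => p.1 < p.2),
                 fderiv ℝ (F p.2) z (F p.1 z)))
      =O[𝓝 0] (fun lam : ℝ => lam ^ 3) := by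
  induction n with
  | zero => simpa [resTower] using isBigO_zero _ _
  | succ n ih =>
    have hpartial : HasSecondOrderExpansion (fun t => resTower t F n z) z _ _ :=
      ih fun i hi => hF i (Icc_subset_Icc_right n.le_succ hi)
    have hFn : ContDiffAt ℝ 2 (F (n + 1)) z :=
      ((hF (n + 1) (by simp)).of_le (by norm_num)).contDiffAt
    rw [sum_Icc_succ_top (by omega),
      sum_filter_lt_Icc_succ (fun i j => fderiv ℝ (F j) z (F i z)), ← map_sum]
    exact hpartial.add_smul_comp hFn
end

section
/- Let d, n ∈ ℕ and let F_1, …, F_n : ℝ^d → ℝ^d each be twice continuously differentiable (ContDiff ℝ 2). For λ ∈ ℝ let R_λ = (id + λF_n) ∘ ⋯ ∘ (id + λF_1). Then for every z ∈ ℝ^d, the function λ ↦ R_λ(z) − ( z + λ·Σ_{i=1}^n F_i(z) ) is O(λ²) as λ → 0. -/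
/-!
Induct on the number of blocks. Writing `g(λ) = R^{(m)}_λ(z)`, one more block adds
`λ • F_{m+1}(g(λ)) = λ • F_{m+1}(z) + λ • (F_{m+1}(g(λ)) - F_{m+1}(z))`. The inductive hypothesis
gives `g(λ) - z = O(λ)`, so differentiability of `F_{m+1}` at `z` makes the last term `O(λ²)`.
-/

open Topology Asymptotics Finset

open Filter

section

variable {E G : Type*} [NormedAddCommGroup E] [NormedSpace ℝ E]
  [NormedAddCommGroup G] [NormedSpace ℝ G]

lemma isBigO_sub_of_isBigO_sub_add_smul {g : ℝ → E} {z v : E}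
    (h : (fun t => g t - (z + t • v)) =O[𝓝 0] fun t => t ^ 2) :
    (fun t => g t - z) =O[𝓝 0] fun t => t := by
  have hsq : (fun t : ℝ => t ^ 2) =O[𝓝 0] fun t => t := (isLittleO_pow_id one_lt_two).isBigO
  have hlin : (fun t : ℝ => t • v) =O[𝓝 0] fun t => t :=
    isBigO_of_le' _ fun t => by rw [norm_smul, mul_comm]
  refine ((h.trans hsq).add hlin).congr_left fun t => ?_
  abel

lemma isBigO_smul_sub_comp_of_differentiableAt {f : E → G} {g : ℝ → E} {z : E}
    (hf : DifferentiableAt ℝ f z) (hg : (fun t => g t - z) =O[𝓝 0] fun t => t) :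
    (fun t => t • (f (g t) - f z)) =O[𝓝 0] fun t => t ^ 2 := by
  have hg_tendsto : Tendsto g (𝓝 0) (𝓝 z) := by
    simpa using (hg.trans_tendsto tendsto_id).add_const z
  have hfg : (fun t => f (g t) - f z) =O[𝓝 0] fun t => t :=
    (hf.isBigO_sub.comp_tendsto hg_tendsto).trans hg
  simpa [pow_two] using (isBigO_refl (fun t : ℝ => t) (𝓝 0)).smul hfg

end

lemma resTower_succ_apply {d : ℕ} (lam : ℝ)
    (F : ℕ → EuclideanSpace ℝ (Fin d) → EuclideanSpace ℝ (Fin d)) (m : ℕ)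
    (z : EuclideanSpace ℝ (Fin d)) :
    resTower lam F (m + 1) z = resTower lam F m z + lam • F (m + 1) (resTower lam F m z) :=
  rfl

lemma resTower_sub_first_order_isBigO {d : ℕ}
    (F : ℕ → EuclideanSpace ℝ (Fin d) → EuclideanSpace ℝ (Fin d))
    (z : EuclideanSpace ℝ (Fin d)) (n : ℕ)
    (hF : ∀ i ∈ Icc 1 n, DifferentiableAt ℝ (F i) z) :
    (fun lam : ℝ => resTower lam F n z - (z + lam • ∑ i ∈ Icc 1 n, F i z))
      =O[𝓝 0] fun lam => lam ^ 2 := by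
  induction n with
  | zero => simpa [resTower] using isBigO_zero (fun lam : ℝ => lam ^ 2) (𝓝 0)
  | succ m ih =>
    have ih := ih fun i hi => hF i (Icc_subset_Icc_right m.le_succ hi)
    have hstep := isBigO_smul_sub_comp_of_differentiableAt
      (hF (m + 1) (right_mem_Icc.2 m.succ_pos)) (isBigO_sub_of_isBigO_sub_add_smul ih)
    refine (ih.add hstep).congr_left fun lam => ?_
    rw [resTower_succ_apply, sum_Icc_succ_top m.succ_pos, smul_add, smul_sub]
    abel

/-- **First-order truncation of the residual tower expansion.** For `C²` residual
branches `F_1, …, F_n`, at every point `z` the residual tower satisfies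
`R_λ(z) = z + λ ∑ᵢ Fᵢ(z) + O(λ²)` as `λ → 0`. -/
theorem residual_tower_first_order (d n : ℕ)
    (F : ℕ → EuclideanSpace ℝ (Fin d) → EuclideanSpace ℝ (Fin d))
    (hF : ∀ i ∈ Finset.Icc 1 n, ContDiff ℝ 2 (F i))
    (z : EuclideanSpace ℝ (Fin d)) :
    (fun lam : ℝ =>
        resTower lam F n z - (z + lam • ∑ i ∈ Finset.Icc 1 n, F i z))
      =O[𝓝 0] (fun lam : ℝ => lam ^ 2) :=
  resTower_sub_first_order_isBigO F z n fun i hi =>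
    (hF i hi).differentiable two_ne_zero |>.differentiableAt
end

section
/- Let p, d, q, n ∈ ℕ, let E : ℝ^p → ℝ^d be differentiable, let F_1, …, F_n : ℝ^d → ℝ^d each be three times continuously differentiable (ContDiff ℝ 3), let W : ℝ^d → ℝ^q be a continuous linear map and b ∈ ℝ^q, and define f_λ(x) = W(R_λ(E(x))) + b where R_λ = (id + λF_n) ∘ ⋯ ∘ (id + λF_1). Then for every x ∈ ℝ^p, the function λ ↦ (D f_λ)(x) − ( W ∘ (D E)(x) + λ · Σ_{i=1}^n W ∘ (D F_i)(E(x)) ∘ (D E)(x) ) is O(λ²) in operator norm as λ → 0, where D denotes the Fréchet derivative with respect to the input x. -/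
open Topology Asymptotics Finset

/-!
Differentiating `R_λ = (1 + λ F_m) ∘ R'_λ` by the chain rule gives
`D R_λ(z) = (1 + λ A(λ)) D R'_λ(z)` with `A(λ) = D F_m (R'_λ z)`. Since `R'_0 = id` and
`λ ↦ R'_λ z` is differentiable, `A(λ) = D F_m(z) + O(λ)` as soon as `F_m` is `C²`; so
multiplying the inductive expansion `D R'_λ(z) = 1 + λ S + O(λ²)` by `1 + λ A(λ)` adds
`λ D F_m(z)` to the first-order term and keeps the remainder `O(λ²)`. The network's Jacobian
is this expansion sandwiched between the fixed bounded maps `W` and `D E(x)`.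
-/

section PerturbedProduct

variable {R : Type*} [NormedRing R] [NormedAlgebra ℝ R]

theorem isBigO_one_add_smul_mul_sub {A G : ℝ → R} {A₀ S : R}
    (hA : (fun t => A t - A₀) =O[𝓝 0] fun t => t)
    (hG : (fun t => G t - (1 + t • S)) =O[𝓝 0] fun t => t ^ 2) :
    (fun t => (1 + t • A t) * G t - (1 + t • (S + A₀))) =O[𝓝 0] fun t => t ^ 2 := by
  have hid : (fun t : ℝ => t) =O[𝓝 0] fun t => t := isBigO_refl _ _
  have hid_one : (fun t : ℝ => t) =O[𝓝 0] fun _ => (1 : ℝ) := (continuous_id.tendsto 0).isBigO_one ℝ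
  have hsq : (fun t : ℝ => t ^ 2) =O[𝓝 0] fun t => t := (isLittleO_pow_id one_lt_two).isBigO
  have hS : (fun t : ℝ => t • S) =O[𝓝 0] fun t => t :=
    (hid.smul (isBigO_const_one ℝ S _)).congr_right fun t => by simp
  have hG₁ : (fun t => G t - 1) =O[𝓝 0] fun t => t :=
    ((hG.trans hsq).add hS).congr_left fun t => by abel
  have hA_bdd : A =O[𝓝 0] fun _ => (1 : ℝ) :=
    ((hA.trans hid_one).add (isBigO_const_one ℝ A₀ _)).congr_left fun t => sub_add_cancel _ _
  have hAG : (fun t => A t * G t - A₀) =O[𝓝 0] fun t => t :=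
    (((hA_bdd.mul hG₁).congr_right fun t => one_mul t).add hA).congr_left
      fun t => by rw [mul_sub, mul_one]; abel
  have htAG : (fun t => t • (A t * G t - A₀)) =O[𝓝 0] fun t => t ^ 2 :=
    (hid.smul hAG).congr_right fun t => by rw [smul_eq_mul, pow_two]
  refine (hG.add htAG).congr_left fun t => ?_
  rw [add_mul, one_mul, smul_mul_assoc, smul_add, smul_sub]
  abel

end PerturbedProduct

section ResTower

variable {d : ℕ}

local notation "Ed" => EuclideanSpace ℝ (Fin d)

theorem resTower_zero_param (F : ℕ → Ed → Ed) (m : ℕ) : resTower (0 : ℝ) F m = id := by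
  induction m with
  | zero => rfl
  | succ m ih => funext z; simp [resTower, resBlock, ih]

theorem differentiable_resBlock {G : Ed → Ed} (hG : Differentiable ℝ G) (lam : ℝ) :
    Differentiable ℝ (resBlock lam G) :=
  differentiable_id.add (hG.const_smul lam)

theorem fderiv_resBlock {G : Ed → Ed} (hG : Differentiable ℝ G) (lam : ℝ) (z : Ed) :
    fderiv ℝ (resBlock lam G) z = 1 + lam • fderiv ℝ G z :=
  ((hasFDerivAt_id z).add ((hG z).hasFDerivAt.const_smul lam)).fderiv

variable {F : ℕ → EuclideanSpace ℝ (Fin d) → EuclideanSpace ℝ (Fin d)} {m : ℕ}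

theorem differentiable_resTower (hF : ∀ i ∈ Icc 1 m, Differentiable ℝ (F i)) (lam : ℝ) :
    Differentiable ℝ (resTower lam F m) := by
  induction m with
  | zero => exact differentiable_id
  | succ m ih =>
    exact (differentiable_resBlock (hF (m + 1) (by simp)) lam).comp
      (ih fun i hi => hF i (Icc_subset_Icc_right m.le_succ hi))

theorem differentiable_resTower_param (hF : ∀ i ∈ Icc 1 m, Differentiable ℝ (F i)) (z : Ed) :
    Differentiable ℝ fun lam : ℝ => resTower lam F m z := by
  induction m with
  | zero => exact differentiable_const z
  | succ m ih =>
    have ih' := ih fun i hi => hF i (Icc_subset_Icc_right m.le_succ hi)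
    exact ih'.add (differentiable_fun_id.smul ((hF (m + 1) (by simp)).comp ih'))

theorem fderiv_resTower_succ (hF : ∀ i ∈ Icc 1 (m + 1), Differentiable ℝ (F i))
    (lam : ℝ) (z : Ed) :
    fderiv ℝ (resTower lam F (m + 1)) z =
      (1 + lam • fderiv ℝ (F (m + 1)) (resTower lam F m z)) * fderiv ℝ (resTower lam F m) z := by
  have hFm1 : Differentiable ℝ (F (m + 1)) := hF (m + 1) (by simp)
  have hFm := differentiable_resTower (fun i hi => hF i (Icc_subset_Icc_right m.le_succ hi)) lam
  rw [← fderiv_resBlock hFm1]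
  exact fderiv_comp z (differentiable_resBlock hFm1 lam _) (hFm z)

theorem isBigO_fderiv_resTower_sub (hF : ∀ i ∈ Icc 1 m, ContDiff ℝ 2 (F i)) (z : Ed) :
    (fun lam : ℝ => fderiv ℝ (resTower lam F m) z - (1 + lam • ∑ i ∈ Icc 1 m, fderiv ℝ (F i) z))
      =O[𝓝 0] fun lam => lam ^ 2 := by
  induction m with
  | zero => simpa [resTower, ContinuousLinearMap.one_def] using isBigO_zero _ _
  | succ m ih =>
    have hFm : ∀ i ∈ Icc 1 m, ContDiff ℝ 2 (F i) :=
      fun i hi => hF i (Icc_subset_Icc_right m.le_succ hi)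
    have hF_diff : ∀ i ∈ Icc 1 (m + 1), Differentiable ℝ (F i) :=
      fun i hi => (hF i hi).differentiable two_ne_zero
    have hA : DifferentiableAt ℝ (fun lam : ℝ => fderiv ℝ (F (m + 1)) (resTower lam F m z)) 0 :=
      ((hF (m + 1) (by simp)).fderiv_right le_rfl).differentiable one_ne_zero _ |>.comp 0
        (differentiable_resTower_param (fun i hi => (hFm i hi).differentiable two_ne_zero) z 0)
    simp_rw [fderiv_resTower_succ hF_diff, sum_Icc_succ_top (Nat.le_add_left 1 m)]
    refine isBigO_one_add_smul_mul_sub ?_ (ih hFm)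
    simpa [resTower_zero_param] using hA.isBigO_sub

end ResTower

/-- **Input-Jacobian expansion of the residual network.** For a differentiable
encoder `E`, `C³` residual branches `F_1, …, F_n` and an affine decoder
`D(z) = W z + b`, the Fréchet derivative in `x` of `f_λ(x) = W(R_λ(E(x))) + b`
satisfies `(D f_λ)(x) = W ∘ (D E)(x) + λ ∑ᵢ W ∘ (D Fᵢ)(E(x)) ∘ (D E)(x) + O(λ²)`
in operator norm as `λ → 0`. -/
theorem residual_network_jacobian_expansion (p d q n : ℕ)
    (E : EuclideanSpace ℝ (Fin p) → EuclideanSpace ℝ (Fin d))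
    (hE : Differentiable ℝ E)
    (F : ℕ → EuclideanSpace ℝ (Fin d) → EuclideanSpace ℝ (Fin d))
    (hF : ∀ i ∈ Finset.Icc 1 n, ContDiff ℝ 3 (F i))
    (W : EuclideanSpace ℝ (Fin d) →L[ℝ] EuclideanSpace ℝ (Fin q))
    (b : EuclideanSpace ℝ (Fin q))
    (x : EuclideanSpace ℝ (Fin p)) :
    (fun lam : ℝ =>
        fderiv ℝ (fun y => W (resTower lam F n (E y)) + b) x -
          (W.comp (fderiv ℝ E x)
             + lam • ∑ i ∈ Finset.Icc 1 n,
                 W.comp ((fderiv ℝ (F i) (E x)).comp (fderiv ℝ E x))))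
      =O[𝓝 0] (fun lam : ℝ => lam ^ 2) := by
  have hF₂ : ∀ i ∈ Icc 1 n, ContDiff ℝ 2 (F i) := fun i hi => (hF i hi).of_le (by norm_num)
  have hR : ∀ lam : ℝ, Differentiable ℝ (resTower lam F n) :=
    differentiable_resTower fun i hi => (hF₂ i hi).differentiable two_ne_zero
  have hchain : ∀ lam : ℝ, fderiv ℝ (fun y => W (resTower lam F n (E y)) + b) x =
      W.comp ((fderiv ℝ (resTower lam F n) (E x)).comp (fderiv ℝ E x)) := fun lam =>
    ((W.hasFDerivAt.comp x (((hR lam) (E x)).hasFDerivAt.comp x (hE x).hasFDerivAt)).add_const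
      b).fderiv
  set Δ := fun lam : ℝ => fderiv ℝ (resTower lam F n) (E x)
    - (1 + lam • ∑ i ∈ Icc 1 n, fderiv ℝ (F i) (E x))
  have hΔ : Δ =O[𝓝 0] fun lam => lam ^ 2 := isBigO_fderiv_resTower_sub hF₂ (E x)
  have hsandwich := ((ContinuousLinearMap.compL ℝ _ _ _ W).isBigO_comp _ (𝓝 (0 : ℝ))).trans
    ((((ContinuousLinearMap.compL ℝ _ _ _).flip (fderiv ℝ E x)).isBigO_comp Δ _).trans hΔ)
  refine hsandwich.congr_left fun lam => ?_
  ext v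
  simp [Δ, hchain]
end

section
/- Let p, d, q, n ∈ ℕ, let E : ℝ^p → ℝ^d be any map, let F_1, …, F_n : ℝ^d → ℝ^d each be continuously differentiable (ContDiff ℝ 1), let W : ℝ^d → ℝ^q be a continuous linear map and b ∈ ℝ^q, and define f_λ(x) = W(R_λ(E(x))) + b with R_λ = (id + λF_n) ∘ ⋯ ∘ (id + λF_1). Then for every x ∈ ℝ^p, the map λ ↦ f_λ(x) has derivative W( Σ_{i=1}^n F_i(E(x)) ) at λ = 0 (in the sense of HasDerivAt). -/
open Topology Asymptotics Finset

lemma resTower_zero_apply {d : ℕ} (F : ℕ → EuclideanSpace ℝ (Fin d) → EuclideanSpace ℝ (Fin d))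
    (m : ℕ) (z : EuclideanSpace ℝ (Fin d)) : resTower 0 F m z = z := by
  induction m with
  | zero => rfl
  | succ m ih => simp [resTower, resBlock, ih]

/-- At `t = 0` the factor `t` kills the chain-rule term, leaving only `G (g 0)`. -/
lemma HasDerivAt.add_smul_comp_at_zero {E : Type*} [NormedAddCommGroup E] [NormedSpace ℝ E]
    {g : ℝ → E} {g' : E} {G : E → E} (hg : HasDerivAt g g' 0)
    (hG : DifferentiableAt ℝ G (g 0)) :
    HasDerivAt (fun t => g t + t • G (g t)) (g' + G (g 0)) 0 := by
  convert hg.add ((hasDerivAt_id 0).smul (hG.hasFDerivAt.comp_hasDerivAt 0 hg)) using 1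
  · rfl
  · simp

lemma hasDerivAt_resTower_zero {d : ℕ}
    (F : ℕ → EuclideanSpace ℝ (Fin d) → EuclideanSpace ℝ (Fin d)) (m : ℕ)
    (z : EuclideanSpace ℝ (Fin d)) (hF : ∀ i ∈ Icc 1 m, DifferentiableAt ℝ (F i) z) :
    HasDerivAt (fun lam : ℝ => resTower lam F m z) (∑ i ∈ Icc 1 m, F i z) 0 := by
  induction m with
  | zero => exact hasDerivAt_const 0 z
  | succ m ih =>
    have hlast : DifferentiableAt ℝ (F (m + 1)) (resTower 0 F m z) := by
      rw [resTower_zero_apply]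
      exact hF (m + 1) (by simp)
    have hinit := ih fun i hi => hF i (Icc_subset_Icc_right m.le_succ hi)
    have hstep := hinit.add_smul_comp_at_zero hlast
    rw [resTower_zero_apply] at hstep
    rwa [sum_Icc_succ_top (by omega)]

/-- **First-order ensemble `M₁` as the λ-derivative of the network output.** For an
encoder `E`, `C¹` residual branches `F_1, …, F_n` and an affine decoder
`D(z) = W z + b`, at every input `x` the map `λ ↦ W(R_λ(E(x))) + b` has derivative
`W(∑ᵢ Fᵢ(E(x)))` at `λ = 0`. -/
theorem residual_network_deriv_at_zero (p d q n : ℕ)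
    (E : EuclideanSpace ℝ (Fin p) → EuclideanSpace ℝ (Fin d))
    (F : ℕ → EuclideanSpace ℝ (Fin d) → EuclideanSpace ℝ (Fin d))
    (hF : ∀ i ∈ Finset.Icc 1 n, ContDiff ℝ 1 (F i))
    (W : EuclideanSpace ℝ (Fin d) →L[ℝ] EuclideanSpace ℝ (Fin q))
    (b : EuclideanSpace ℝ (Fin q))
    (x : EuclideanSpace ℝ (Fin p)) :
    HasDerivAt (fun lam : ℝ => W (resTower lam F n (E x)) + b)
      (W (∑ i ∈ Finset.Icc 1 n, F i (E x))) 0 := by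
  have htower := hasDerivAt_resTower_zero F n (E x) fun i hi =>
    (hF i hi).differentiable one_ne_zero (E x)
  exact (W.hasFDerivAt.comp_hasDerivAt 0 htower).add_const b
end
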